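/- Suppose n|β̂| > λ and b^{(0)} ≠ 0, and let β* = (|β̂| − λ/n) sign(β̂). Then the recursion b^{(k+1)} = |b^{(k)}| β̂ / (λ/n + |b^{(k)}|) satisfies |b^{(k)} − β*| ≤ (λ/(n|β̂|))^k |β̂/b^{(0)}| |b^{(0)} − β*| for all k ≥ 1; in particular b^{(k)} → β* geometrically. -/

import Mathlib

/-!
Write `t = λ/n`, `f x = |x| β̂ / (t + |x|)` and `β* = ST(β̂, t)`. Because `|β*| = |β̂| - t`, one
step gives `|f x - β*| ≤ t / (t + |x|) · |x - β*|`, and `t / (t + |x|) = (t / |β̂|) · |f x| / |x|`.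
So the relative error `|b k - β*| / |b k|` shrinks by the factor `t / |β̂|` at every step, and
since `|f x| ≤ |β̂|` this yields the absolute bound from the first step on.
-/

namespace Real

lemma abs_mul_sign (x : ℝ) : |x| * sign x = x := by
  rcases lt_trichotomy x 0 with hx | rfl | hx
  · rw [sign_of_neg hx, abs_of_neg hx]; ring
  · simp
  · rw [sign_of_pos hx, abs_of_pos hx, mul_one]

lemma abs_sign_of_ne_zero {x : ℝ} (hx : x ≠ 0) : |sign x| = 1 := by
  rcases sign_apply_eq_of_ne_zero x hx with h | h <;> simp [h]

end Real

noncomputable def softThreshold (β t : ℝ) : ℝ := (|β| - t) * Real.sign β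

/-- Its fixed point is `softThreshold β t` when `0 < t < |β|`. -/
noncomputable def slogStep (t β x : ℝ) : ℝ := |x| * β / (t + |x|)

section slogStep

variable {t β x : ℝ}

lemma abs_slogStep (ht : 0 ≤ t) : |slogStep t β x| = |x| * |β| / (t + |x|) := by
  rw [slogStep, abs_div, abs_mul, abs_abs, abs_of_nonneg (add_nonneg ht (abs_nonneg x))]

lemma abs_slogStep_le (ht : 0 ≤ t) : |slogStep t β x| ≤ |β| := by
  rw [abs_slogStep ht]
  rcases (abs_nonneg x).eq_or_lt with hx | hx
  · rw [← hx, zero_mul, zero_div]; exact abs_nonneg β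
  · rw [div_le_iff₀ (by positivity)]
    nlinarith [abs_nonneg β]

lemma slogStep_ne_zero (ht : 0 ≤ t) (hβ : β ≠ 0) (hx : x ≠ 0) : slogStep t β x ≠ 0 := by
  have hpos : 0 < t + |x| := by positivity
  exact div_ne_zero (mul_ne_zero (abs_ne_zero.mpr hx) hβ) hpos.ne'

lemma slogStep_sub_softThreshold (hx : t + |x| ≠ 0) :
    slogStep t β x - softThreshold β t =
      Real.sign β * (t * (|x| - (|β| - t)) / (t + |x|)) := by
  rw [slogStep, softThreshold]
  field_simp
  linear_combination -|x| * Real.abs_mul_sign β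

lemma abs_softThreshold (ht : 0 < t) (htβ : t ≤ |β|) : |softThreshold β t| = |β| - t := by
  have hβ : β ≠ 0 := abs_pos.mp (ht.trans_le htβ)
  rw [softThreshold, abs_mul, Real.abs_sign_of_ne_zero hβ, mul_one, abs_of_nonneg (by linarith)]

lemma abs_slogStep_sub_softThreshold_le (ht : 0 < t) (htβ : t ≤ |β|) :
    |slogStep t β x - softThreshold β t| ≤ t / (t + |x|) * |x - softThreshold β t| := by
  have hβ : β ≠ 0 := abs_pos.mp (ht.trans_le htβ)
  have hpos : 0 < t + |x| := by positivity
  rw [slogStep_sub_softThreshold hpos.ne', abs_mul, Real.abs_sign_of_ne_zero hβ, one_mul,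
    abs_div, abs_mul, abs_of_pos ht, abs_of_pos hpos, mul_div_right_comm]
  gcongr _ * ?_
  rw [← abs_softThreshold ht htβ]
  exact abs_abs_sub_abs_le_abs_sub _ _

lemma relError_slogStep_le (ht : 0 < t) (htβ : t ≤ |β|) (hx : x ≠ 0) :
    |slogStep t β x - softThreshold β t| / |slogStep t β x| ≤
      t / |β| * (|x - softThreshold β t| / |x|) := by
  have hβ : 0 < |β| := ht.trans_le htβ
  have hxpos : 0 < |x| := abs_pos.mpr hx
  have hfx : 0 < |slogStep t β x| :=
    abs_pos.mpr (slogStep_ne_zero ht.le (abs_pos.mp hβ) hx)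
  rw [div_le_iff₀ hfx]
  calc |slogStep t β x - softThreshold β t|
      ≤ t / (t + |x|) * |x - softThreshold β t| := abs_slogStep_sub_softThreshold_le ht htβ
    _ = t / |β| * (|x - softThreshold β t| / |x|) * |slogStep t β x| := by
      rw [abs_slogStep ht.le]
      field_simp

lemma relError_slogStep_iterate_le (ht : 0 < t) (htβ : t ≤ |β|) {b : ℕ → ℝ} (hb0 : b 0 ≠ 0)
    (hrec : ∀ k, b (k + 1) = slogStep t β (b k)) (k : ℕ) :
    b k ≠ 0 ∧ |b k - softThreshold β t| / |b k| ≤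
      (t / |β|) ^ k * (|b 0 - softThreshold β t| / |b 0|) := by
  induction k with
  | zero => simpa using hb0
  | succ k ih =>
    obtain ⟨hbk, hrel⟩ := ih
    have hβ : β ≠ 0 := abs_pos.mp (ht.trans_le htβ)
    refine ⟨hrec k ▸ slogStep_ne_zero ht.le hβ hbk, ?_⟩
    calc |b (k + 1) - softThreshold β t| / |b (k + 1)|
        ≤ t / |β| * (|b k - softThreshold β t| / |b k|) :=
          hrec k ▸ relError_slogStep_le ht htβ hbk
      _ ≤ t / |β| * ((t / |β|) ^ k * (|b 0 - softThreshold β t| / |b 0|)) := by gcongr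
      _ = (t / |β|) ^ (k + 1) * (|b 0 - softThreshold β t| / |b 0|) := by ring

theorem abs_slogStep_iterate_sub_softThreshold_le (ht : 0 < t) (htβ : t ≤ |β|) {b : ℕ → ℝ}
    (hb0 : b 0 ≠ 0) (hrec : ∀ k, b (k + 1) = slogStep t β (b k)) {k : ℕ} (hk : 1 ≤ k) :
    |b k - softThreshold β t| ≤ (t / |β|) ^ k * |β / b 0| * |b 0 - softThreshold β t| := by
  obtain ⟨hbk, hrel⟩ := relError_slogStep_iterate_le ht htβ hb0 hrec k
  obtain ⟨j, rfl⟩ := Nat.exists_eq_add_of_le' hk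
  have hbound : |b (j + 1)| ≤ |β| := hrec j ▸ abs_slogStep_le ht.le
  rw [div_le_iff₀ (abs_pos.mpr hbk)] at hrel
  calc |b (j + 1) - softThreshold β t|
      ≤ (t / |β|) ^ (j + 1) * (|b 0 - softThreshold β t| / |b 0|) * |b (j + 1)| := hrel
    _ ≤ (t / |β|) ^ (j + 1) * (|b 0 - softThreshold β t| / |b 0|) * |β| := by gcongr
    _ = (t / |β|) ^ (j + 1) * |β / b 0| * |b 0 - softThreshold β t| := by
      rw [abs_div]; ring

end slogStep

theorem slog_one_dim_rate_gt_general (lam : ℝ) (hlam : 0 < lam) (n : ℕ)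
    (βhat : ℝ) (hcase : lam < (n : ℝ) * |βhat|) (b : ℕ → ℝ) (hb0 : b 0 ≠ 0)
    (βstar : ℝ) (hβstar : βstar = (|βhat| - lam / n) * Real.sign βhat)
    (hrec : ∀ k, b (k + 1) = |b k| * βhat / (lam / n + |b k|)) :
    ∀ k : ℕ, 1 ≤ k →
      |b k - βstar| ≤ (lam / ((n : ℝ) * |βhat|)) ^ k * |βhat / b 0| * |b 0 - βstar| := by
  intro k hk
  have hn : (0 : ℝ) < n := pos_of_mul_pos_left (hlam.trans hcase) (abs_nonneg βhat)
  have ht : 0 < lam / n := div_pos hlam hn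
  have htβ : lam / n ≤ |βhat| := (div_lt_iff₀' hn).mpr hcase |>.le
  rw [← div_div, hβstar]
  exact abs_slogStep_iterate_sub_softThreshold_le ht htβ hb0 hrec hk

theorem slog_one_dim_rate_gt (lam : ℝ) (hlam : 0 < lam) (n : ℕ) (hn : 1 ≤ n)
    (βhat : ℝ) (hcase : lam < (n : ℝ) * |βhat|) (b : ℕ → ℝ) (hb0 : b 0 ≠ 0)
    (βstar : ℝ) (hβstar : βstar = (|βhat| - lam / n) * Real.sign βhat)
    (hrec : ∀ k, b (k + 1) = |b k| * βhat / (lam / n + |b k|)) :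
    ∀ k : ℕ, 1 ≤ k →
      |b k - βstar| ≤ (lam / ((n : ℝ) * |βhat|)) ^ k * |βhat / b 0| * |b 0 - βstar| :=
  slog_one_dim_rate_gt_general lam hlam n βhat hcase b hb0 βstar hβstar hrec
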